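/- Let ω₀ be the standard symplectic form on ℝ^{2n}, n ≥ 3, and α a 2-form with ω₀^{k-1} ∧ α = 0 for some 2 ≤ k < n. Then the coefficients of α on dxᵢ ∧ dxⱼ, dyᵢ ∧ dyⱼ (all i < j), and dxᵢ ∧ dyⱼ (all i ≠ j) vanish; i.e., α is a linear combination of the forms dxᵢ ∧ dyᵢ. -/

import Mathlib

set_option synthInstance.maxHeartbeats 1000000
set_option maxHeartbeats 1000000

noncomputable section

open ExteriorAlgebra

/-- `ℝ^{2n}` with Darboux coordinates. -/
abbrev Vn (n : ℕ) : Type := (Fin n → ℝ) × (Fin n → ℝ)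

/-- The coordinate `1`-form `dxᵢ`. -/
def dx {n : ℕ} (i : Fin n) : Module.Dual ℝ (Vn n) :=
  (LinearMap.proj i).comp (LinearMap.fst ℝ (Fin n → ℝ) (Fin n → ℝ))

/-- The coordinate `1`-form `dyᵢ`. -/
def dy {n : ℕ} (i : Fin n) : Module.Dual ℝ (Vn n) :=
  (LinearMap.proj i).comp (LinearMap.snd ℝ (Fin n → ℝ) (Fin n → ℝ))

/-- The standard symplectic form `ω₀ = ∑ᵢ dxᵢ ∧ dyᵢ`. -/
def omega0 (n : ℕ) : ExteriorAlgebra ℝ (Module.Dual ℝ (Vn n)) :=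
  ∑ i : Fin n, ι ℝ (dx i) * ι ℝ (dy i)

namespace Stmt15Aux

variable {R : Type*} [CommRing R] {M : Type*} [AddCommGroup M] [Module R M]

lemma ι_anticomm (x y : M) : ι R x * ι R y = -(ι R y * ι R x) :=
  eq_neg_of_add_eq_zero_left (ι_add_mul_swap x y)

lemma commute_pair (x y z : M) : Commute (ι R x * ι R y) (ι R z) := by
  show _ = _
  rw [mul_assoc, ι_anticomm y z, mul_neg, ← mul_assoc, ι_anticomm x z, neg_mul, neg_neg,
    mul_assoc]

lemma pair_mul_self_left (x y : M) : (ι R x * ι R y) * ι R x = 0 := by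
  rw [mul_assoc, ι_anticomm y x, mul_neg, ← mul_assoc, ι_sq_zero, zero_mul, neg_zero]

lemma pair_mul_self_right (x y : M) : (ι R x * ι R y) * ι R y = 0 := by
  rw [mul_assoc, ι_sq_zero, mul_zero]

lemma list_prod_mul_eq_zero {A : Type*} [Ring A] :
    ∀ (L : List A) (t : A), (∀ x ∈ L, Commute x t) → (∃ z ∈ L, z * t = 0) →
      L.prod * t = 0 := by
  intro L
  induction L with
  | nil => rintro t _ ⟨z, hz, _⟩; simp at hz
  | cons a L ih =>
    rintro t hc ⟨z, hz, hz0⟩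
    rw [List.prod_cons, mul_assoc]
    rcases List.mem_cons.mp hz with rfl | hzL
    · have hLt : Commute t L.prod :=
        Commute.list_prod_right L t fun x hx => (hc x (List.mem_cons_of_mem _ hx)).symm
      rw [← hLt.eq, ← mul_assoc, hz0, zero_mul]
    · rw [ih t (fun x hx => hc x (List.mem_cons_of_mem _ hx)) ⟨z, hzL, hz0⟩, mul_zero]

variable (R) in
/-- Product of pairs `ι aₚ * ι bₚ`. -/
def PP {m : ℕ} (aa bb : Fin m → M) : ExteriorAlgebra R M :=
  (List.ofFn fun p => ι R (aa p) * ι R (bb p)).prod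

lemma pp_succ {m : ℕ} (aa bb : Fin (m+1) → M) :
    PP R aa bb = (ι R (aa 0) * ι R (bb 0)) * PP R (fun p => aa p.succ) (fun p => bb p.succ) := by
  simp only [PP, List.ofFn_succ, List.prod_cons]

lemma pp_commute_ι {m : ℕ} (aa bb : Fin m → M) (z : M) :
    Commute (PP R aa bb) (ι R z) := by
  refine Commute.list_prod_left _ _ fun x hx => ?_
  obtain ⟨p, rfl⟩ := List.mem_ofFn.mp hx
  exact commute_pair _ _ _

lemma pp_mul_ι_eq_zero {m : ℕ} (aa bb : Fin m → M) (p₀ : Fin m) (w : M)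
    (hw : w = aa p₀ ∨ w = bb p₀) : PP R aa bb * ι R w = 0 := by
  refine list_prod_mul_eq_zero _ _ (fun x hx => ?_) ⟨ι R (aa p₀) * ι R (bb p₀), ?_, ?_⟩
  · obtain ⟨p, rfl⟩ := List.mem_ofFn.mp hx
    exact commute_pair _ _ _
  · exact List.mem_ofFn.mpr ⟨p₀, rfl⟩
  · rcases hw with rfl | rfl
    · exact pair_mul_self_left _ _
    · exact pair_mul_self_right _ _

lemma pp_mul_pair_eq_zero {m : ℕ} (aa bb : Fin m → M) (w₁ w₂ : M)
    (hw : (∃ p, w₁ = aa p ∨ w₁ = bb p) ∨ w₁ = 0 ∨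
          (∃ p, w₂ = aa p ∨ w₂ = bb p) ∨ w₂ = 0) :
    PP R aa bb * (ι R w₁ * ι R w₂) = 0 := by
  rcases hw with ⟨p, hp⟩ | rfl | ⟨p, hp⟩ | rfl
  · rw [← mul_assoc, pp_mul_ι_eq_zero aa bb p _ hp, zero_mul]
  · simp
  · rw [← mul_assoc, (pp_commute_ι aa bb w₁).eq, mul_assoc,
      pp_mul_ι_eq_zero aa bb p _ hp, mul_zero]
  · simp

lemma pair_sq_zero (x y : M) : (ι R x * ι R y) * (ι R x * ι R y) = 0 := by
  rw [← mul_assoc, pair_mul_self_left, zero_mul]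

lemma pp_pow : ∀ (m : ℕ) (aa bb : Fin m → M),
    (∑ p, ι R (aa p) * ι R (bb p)) ^ m = m.factorial • PP R aa bb := by
  intro m
  induction m with
  | zero => intro aa bb; simp [PP]
  | succ m ih =>
    intro aa bb
    rw [Fin.sum_univ_succ]
    set Q0 := ι R (aa 0) * ι R (bb 0) with hQ0
    set x := ∑ p : Fin m, ι R (aa p.succ) * ι R (bb p.succ) with hx
    have hcomm : Commute Q0 x :=
      Commute.sum_right _ _ _ fun p _ =>
        (commute_pair _ _ _).mul_right (commute_pair _ _ _)
    have hQ0sq : Q0 * Q0 = 0 := pair_sq_zero _ _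
    have hxpow : x ^ m = m.factorial • PP R (fun p => aa p.succ) (fun p => bb p.succ) :=
      ih _ _
    have hxm1 : x ^ (m + 1) = 0 := by
      rw [pow_succ, hxpow, smul_mul_assoc, hx, Finset.mul_sum]
      rw [Finset.sum_eq_zero fun p _ => pp_mul_pair_eq_zero _ _ _ _
        (Or.inl ⟨p, Or.inl rfl⟩), smul_zero]
    have hPPs : PP R aa bb =
        Q0 * PP R (fun p => aa p.succ) (fun p => bb p.succ) := by
      simp only [PP, List.ofFn_succ, List.prod_cons]
      rfl
    rw [hcomm.add_pow, Finset.sum_range_succ', Finset.sum_range_succ']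
    rw [Finset.sum_eq_zero (fun i (_ : i ∈ Finset.range m) => by
      rw [pow_succ, pow_succ, mul_assoc (Q0 ^ i), hQ0sq, mul_zero, zero_mul, zero_mul])]
    rw [pow_one, pow_zero, one_mul, Nat.add_sub_cancel, Nat.sub_zero, hxm1, zero_mul,
      add_zero, zero_add, Nat.choose_one_right, hxpow, hPPs, mul_smul_comm, smul_mul_assoc]
    have hc : (Q0 * PP R (fun p => aa p.succ) (fun p => bb p.succ)) *
        (((m+1 : ℕ) : ExteriorAlgebra R M)) =
        (m+1) • (Q0 * PP R (fun p => aa p.succ) (fun p => bb p.succ)) := by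
      rw [← (Nat.cast_commute (m+1 : ℕ)
        (Q0 * PP R (fun p => aa p.succ) (fun p => bb p.succ))).eq, ← nsmul_eq_mul]
    rw [hc, smul_smul, Nat.factorial_succ, Nat.mul_comm]

section contract

variable {N : Type*} [AddCommGroup N] [Module ℝ N]

lemma contract_pp_zero (d : Module.Dual ℝ (Module.Dual ℝ N)) :
    ∀ (m : ℕ) (aa bb : Fin m → Module.Dual ℝ N), (∀ p, d (aa p) = 0) → (∀ p, d (bb p) = 0) →
      CliffordAlgebra.contractLeft d (PP ℝ aa bb) = 0 := by
  intro m
  induction m with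
  | zero =>
    intro aa bb _ _
    show CliffordAlgebra.contractLeft d (List.prod _) = 0
    rw [List.ofFn_zero, List.prod_nil, CliffordAlgebra.contractLeft_one]
  | succ m ih =>
    intro aa bb ha hb
    rw [pp_succ, mul_assoc, CliffordAlgebra.contractLeft_ι_mul,
      CliffordAlgebra.contractLeft_ι_mul, ih _ _ (fun p => ha p.succ) (fun p => hb p.succ),
      ha 0, hb 0]
    simp

lemma pp_ne_zero :
    ∀ (m : ℕ) (aa bb : Fin m → Module.Dual ℝ N) (va vb : Fin m → N),
      (∀ p q, aa p (va q) = if p = q then 1 else 0) →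
      (∀ p q, bb p (vb q) = if p = q then 1 else 0) →
      (∀ p q, aa p (vb q) = 0) → (∀ p q, bb p (va q) = 0) →
      PP ℝ aa bb ≠ 0 := by
  intro m
  induction m with
  | zero =>
    intro aa bb va vb _ _ _ _
    show List.prod _ ≠ 0
    rw [List.ofFn_zero, List.prod_nil]
    exact one_ne_zero
  | succ m ih =>
    intro aa bb va vb haa hbb hab hba h0
    set rest := PP ℝ (fun p => aa p.succ) (fun p => bb p.succ) with hrest
    have h1 : CliffordAlgebra.contractLeft (Module.Dual.eval ℝ N (va 0)) (PP ℝ aa bb)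
        = ι ℝ (bb 0) * rest := by
      rw [pp_succ, mul_assoc, CliffordAlgebra.contractLeft_ι_mul,
        CliffordAlgebra.contractLeft_ι_mul,
        contract_pp_zero _ m _ _ (fun p => by
          simpa [Fin.succ_ne_zero] using haa p.succ 0) (fun p => hba p.succ 0)]
      have e1 : Module.Dual.eval ℝ N (va 0) (aa 0) = 1 := by simpa using haa 0 0
      have e2 : Module.Dual.eval ℝ N (va 0) (bb 0) = 0 := by simpa using hba 0 0
      rw [e1, e2, one_smul, zero_smul, mul_zero, zero_sub, mul_neg, sub_neg_eq_add, mul_zero,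
        add_zero]
    have h2 : CliffordAlgebra.contractLeft (Module.Dual.eval ℝ N (vb 0))
        (ι ℝ (bb 0) * rest) = rest := by
      rw [CliffordAlgebra.contractLeft_ι_mul,
        contract_pp_zero _ m _ _ (fun p => hab p.succ 0) (fun p => by
          simpa [Fin.succ_ne_zero] using hbb p.succ 0)]
      have e1 : Module.Dual.eval ℝ N (vb 0) (bb 0) = 1 := by simpa using hbb 0 0
      rw [e1, one_smul, mul_zero, sub_zero]
    have : rest = 0 := by rw [← h2, ← h1, h0, map_zero, map_zero]
    exact ih _ _ (fun p => va p.succ) (fun p => vb p.succ)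
      (fun p q => by simpa [Fin.succ_inj] using haa p.succ q.succ)
      (fun p q => by simpa [Fin.succ_inj] using hbb p.succ q.succ)
      (fun p q => hab p.succ q.succ) (fun p q => hba p.succ q.succ) this

end contract

lemma pp_snoc {m : ℕ} (aa bb : Fin m → M) (u v : M) :
    PP R (Fin.snoc aa u) (Fin.snoc bb v) = PP R aa bb * (ι R u * ι R v) := by
  simp only [PP, List.ofFn_succ', List.concat_eq_append, List.prod_append, List.prod_cons,
    List.prod_nil, mul_one, Fin.snoc_castSucc, Fin.snoc_last]

variable {n : ℕ}

def ex (s : Fin n) : Vn n := (Pi.single s 1, 0)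
def ey (s : Fin n) : Vn n := (0, Pi.single s 1)

@[simp] lemma dx_ex (t s : Fin n) : dx t (ex s) = if t = s then 1 else 0 := by
  simp [dx, ex, Pi.single_apply]
@[simp] lemma dx_ey (t s : Fin n) : dx t (ey s) = 0 := by simp [dx, ey]
@[simp] lemma dy_ex (t s : Fin n) : dy t (ex s) = 0 := by simp [dy, ex]
@[simp] lemma dy_ey (t s : Fin n) : dy t (ey s) = if t = s then 1 else 0 := by
  simp [dy, ey, Pi.single_apply]

def uu (Sx Sy : Finset (Fin n)) : Vn n →ₗ[ℝ] Vn n :=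
  LinearMap.prodMap
    (LinearMap.pi fun t => if t ∈ Sx then LinearMap.proj t else 0)
    (LinearMap.pi fun t => if t ∈ Sy then LinearMap.proj t else 0)

def pim (Sx Sy : Finset (Fin n)) : Module.Dual ℝ (Vn n) →ₗ[ℝ] Module.Dual ℝ (Vn n) :=
  (uu Sx Sy).dualMap

lemma pim_dx (Sx Sy : Finset (Fin n)) (t : Fin n) :
    pim Sx Sy (dx t) = if t ∈ Sx then dx t else 0 := by
  apply LinearMap.ext
  rintro ⟨xv, yv⟩
  by_cases h : t ∈ Sx <;>
    simp [pim, uu, dx, LinearMap.dualMap_apply, LinearMap.pi_apply, h]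

lemma pim_dy (Sx Sy : Finset (Fin n)) (t : Fin n) :
    pim Sx Sy (dy t) = if t ∈ Sy then dy t else 0 := by
  apply LinearMap.ext
  rintro ⟨xv, yv⟩
  by_cases h : t ∈ Sy <;>
    simp [pim, uu, dy, LinearMap.dualMap_apply, LinearMap.pi_apply, h]

def phi (Sx Sy : Finset (Fin n)) :
    ExteriorAlgebra ℝ (Module.Dual ℝ (Vn n)) →ₐ[ℝ] ExteriorAlgebra ℝ (Module.Dual ℝ (Vn n)) :=
  lift ℝ ⟨(ι ℝ).comp (pim Sx Sy), fun f => ι_sq_zero _⟩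

@[simp] lemma phi_ι (Sx Sy : Finset (Fin n)) (f : Module.Dual ℝ (Vn n)) :
    phi Sx Sy (ι ℝ f) = ι ℝ (pim Sx Sy f) := by
  unfold phi
  exact lift_ι_apply (R := ℝ) ((ι ℝ).comp (pim Sx Sy)) (fun g => ι_sq_zero _) f

lemma phi_omega {m : ℕ} (Sx Sy : Finset (Fin n)) (σ : Fin (m+1) → Fin n)
    (hσ : Function.Injective σ)
    (hmem : ∀ t, (t ∈ Sx ∧ t ∈ Sy) ↔ ∃ p, σ p = t) :
    phi Sx Sy (omega0 n) = ∑ p, ι ℝ (dx (σ p)) * ι ℝ (dy (σ p)) := by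
  rw [omega0, map_sum]
  have step : ∀ t : Fin n, phi Sx Sy (ι ℝ (dx t) * ι ℝ (dy t)) =
      if (∃ p, σ p = t) then ι ℝ (dx t) * ι ℝ (dy t) else 0 := by
    intro t
    rw [map_mul, phi_ι, phi_ι, pim_dx, pim_dy]
    by_cases hx : t ∈ Sx <;> by_cases hy : t ∈ Sy
    · rw [if_pos hx, if_pos hy, if_pos ((hmem t).mp ⟨hx, hy⟩)]
    · rw [if_neg (fun hex => hy ((hmem t).mpr hex).2)]; simp [hx, hy]
    · rw [if_neg (fun hex => hx ((hmem t).mpr hex).1)]; simp [hx, hy]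
    · rw [if_neg (fun hex => hx ((hmem t).mpr hex).1)]; simp [hx, hy]
  rw [Finset.sum_congr rfl fun t _ => step t]
  have hcond : ∀ t : Fin n, (∃ p, σ p = t) ↔ t ∈ Finset.image σ Finset.univ := by simp
  rw [Finset.sum_congr rfl fun t _ => if_congr (hcond t) rfl rfl]
  rw [Finset.sum_ite_mem, Finset.univ_inter,
    Finset.sum_image (fun p _ q _ hpq => hσ hpq)]

lemma main_extract {m : ℕ} (σ : Fin (m+1) → Fin n) (hσ : Function.Injective σ)
    (Sx Sy : Finset (Fin n)) (hmem : ∀ t, (t ∈ Sx ∧ t ∈ Sy) ↔ ∃ p, σ p = t)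
    (α : ExteriorAlgebra ℝ (Module.Dual ℝ (Vn n)))
    (h : omega0 n ^ (m+1) * α = 0)
    (r : ℝ) (u v : Module.Dual ℝ (Vn n))
    (hφα : PP ℝ (fun p => dx (σ p)) (fun p => dy (σ p)) * phi Sx Sy α =
      r • (PP ℝ (fun p => dx (σ p)) (fun p => dy (σ p)) * (ι ℝ u * ι ℝ v)))
    (hM : PP ℝ (fun p => dx (σ p)) (fun p => dy (σ p)) * (ι ℝ u * ι ℝ v) ≠ 0) :
    r = 0 := by
  have h2 := congrArg (phi Sx Sy) h
  rw [map_zero, map_mul, map_pow, phi_omega Sx Sy σ hσ hmem] at h2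
  have hpow : (∑ p, ι ℝ (dx (σ p)) * ι ℝ (dy (σ p))) ^ (m+1) =
      (m+1).factorial • PP ℝ (fun p => dx (σ p)) (fun p => dy (σ p)) :=
    pp_pow (m+1) _ _
  rw [hpow, smul_mul_assoc, hφα, ← Nat.cast_smul_eq_nsmul ℝ, smul_smul] at h2
  rcases smul_eq_zero.mp h2 with h3 | h3
  · rcases mul_eq_zero.mp h3 with h4 | h4
    · exact absurd h4 (Nat.cast_ne_zero.mpr (Nat.factorial_ne_zero _))
    · exact h4
  · exact absurd h3 hM

end Stmt15Aux

set_option maxHeartbeats 4000000 in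
open Stmt15Aux in
theorem stmt15 {n k : ℕ} (hn : 3 ≤ n) (hk : 2 ≤ k) (hkn : k < n)
    (a b c : Fin n → Fin n → ℝ)
    (h : omega0 n ^ (k - 1) *
        (∑ i : Fin n, ∑ j ∈ Finset.Ioi i, a i j • (ι ℝ (dx i) * ι ℝ (dx j)) +
         ∑ i : Fin n, ∑ j : Fin n, b i j • (ι ℝ (dx i) * ι ℝ (dy j)) +
         ∑ i : Fin n, ∑ j ∈ Finset.Ioi i, c i j • (ι ℝ (dy i) * ι ℝ (dy j))) = 0) :
    (∀ i j : Fin n, i < j → a i j = 0) ∧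
    (∀ i j : Fin n, i < j → c i j = 0) ∧
    (∀ i j : Fin n, i ≠ j → b i j = 0) := by
  obtain ⟨m, rfl⟩ : ∃ m, k = m + 2 := ⟨k - 2, by omega⟩
  rw [show m + 2 - 1 = m + 1 by omega] at h
  refine ⟨?_, ?_, ?_⟩
  · -- a-case
    intro i j hij
    have hij' : i ≠ j := ne_of_lt hij
    have hcard : m + 1 ≤ ({i, j}ᶜ : Finset (Fin n)).card := by
      rw [Finset.card_compl, Finset.card_insert_of_notMem (by simp [hij']),
        Finset.card_singleton]
      simp only [Fintype.card_fin]
      omega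
    set σ : Fin (m+1) → Fin n :=
      fun p => Finset.orderEmbOfCardLe ({i, j}ᶜ : Finset (Fin n)) hcard p with hσdef
    have hσ : Function.Injective σ :=
      fun p q hpq => (Finset.orderEmbOfCardLe _ hcard).injective hpq
    have hσij : ∀ p, σ p ≠ i ∧ σ p ≠ j := by
      intro p
      have hp := Finset.orderEmbOfCardLe_mem ({i, j}ᶜ : Finset (Fin n)) hcard p
      rw [Finset.mem_compl, Finset.mem_insert, Finset.mem_singleton] at hp
      push_neg at hp
      exact hp
    set S : Finset (Fin n) := Finset.image σ Finset.univ with hSdef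
    have hS : ∀ t, t ∈ S ↔ ∃ p, σ p = t := by intro t; simp [hSdef]
    have hiS : i ∉ S := fun hmem => by
      obtain ⟨p, hp⟩ := (hS i).mp hmem; exact (hσij p).1 hp
    have hjS : j ∉ S := fun hmem => by
      obtain ⟨p, hp⟩ := (hS j).mp hmem; exact (hσij p).2 hp
    set Sx : Finset (Fin n) := S ∪ {i, j} with hSxdef
    have hmem : ∀ t, (t ∈ Sx ∧ t ∈ S) ↔ ∃ p, σ p = t := by
      intro t
      rw [← hS t]
      constructor
      · exact fun ht => ht.2
      · intro ht; exact ⟨Finset.mem_union_left _ ht, ht⟩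
    have hiSx : i ∈ Sx := Finset.mem_union_right _ (by simp)
    have hjSx : j ∈ Sx := Finset.mem_union_right _ (by simp)
    refine main_extract σ hσ Sx S hmem _ h (a i j) (dx i) (dx j) ?_ ?_
    · -- coefficient extraction
      set PPσ := PP ℝ (fun p => dx (σ p)) (fun p => dy (σ p)) with hPPσ
      have killx : ∀ (t : Fin n) (w : Module.Dual ℝ (Vn n)), t ∈ S →
          PPσ * (ι ℝ (dx t) * ι ℝ w) = 0 := by
        intro t w ht
        obtain ⟨p, rfl⟩ := (hS t).mp ht
        exact pp_mul_pair_eq_zero _ _ _ _ (Or.inl ⟨p, Or.inl rfl⟩)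
      have killy : ∀ (t : Fin n) (w : Module.Dual ℝ (Vn n)), t ∈ S →
          PPσ * (ι ℝ (dy t) * ι ℝ w) = 0 := by
        intro t w ht
        obtain ⟨p, rfl⟩ := (hS t).mp ht
        exact pp_mul_pair_eq_zero _ _ _ _ (Or.inl ⟨p, Or.inr rfl⟩)
      have killx' : ∀ (t : Fin n) (w : Module.Dual ℝ (Vn n)), t ∈ S →
          PPσ * (ι ℝ w * ι ℝ (dx t)) = 0 := by
        intro t w ht
        obtain ⟨p, rfl⟩ := (hS t).mp ht
        exact pp_mul_pair_eq_zero _ _ _ _ (Or.inr (Or.inr (Or.inl ⟨p, Or.inl rfl⟩)))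
      have killy' : ∀ (t : Fin n) (w : Module.Dual ℝ (Vn n)), t ∈ S →
          PPσ * (ι ℝ w * ι ℝ (dy t)) = 0 := by
        intro t w ht
        obtain ⟨p, rfl⟩ := (hS t).mp ht
        exact pp_mul_pair_eq_zero _ _ _ _ (Or.inr (Or.inr (Or.inl ⟨p, Or.inr rfl⟩)))
      have hkillpair : ∀ p q : Fin n, p < q → ¬(p = i ∧ q = j) →
          PPσ * (ι ℝ (pim Sx S (dx p)) * ι ℝ (pim Sx S (dx q))) = 0 := by
        intro p q hlt hpq
        by_cases hp : p ∈ S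
        · rw [pim_dx, if_pos (Finset.mem_union_left _ hp)]
          exact killx p _ hp
        · by_cases hpij : p = i ∨ p = j
          · rw [pim_dx (t := p), if_pos (Finset.mem_union_right _ (by
              rcases hpij with rfl | rfl <;> simp))]
            by_cases hq : q ∈ S
            · rw [pim_dx (t := q), if_pos (Finset.mem_union_left _ hq)]
              exact killx' q _ hq
            · by_cases hqij : q = i ∨ q = j
              · exfalso
                rcases hpij with rfl | rfl <;> rcases hqij with rfl | rfl
                · exact lt_irrefl _ hlt
                · exact hpq ⟨rfl, rfl⟩
                · exact lt_asymm hij hlt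
                · exact lt_irrefl _ hlt
              · rw [pim_dx (t := q), if_neg (fun hmemq => by
                  rcases Finset.mem_union.mp hmemq with h' | h'
                  · exact hq h'
                  · exact hqij (by simpa using h'))]
                simp
          · rw [pim_dx (t := p), if_neg (fun hmemp => by
              rcases Finset.mem_union.mp hmemp with h' | h'
              · exact hp h'
              · exact hpij (by simpa using h'))]
            simp
      rw [map_add, map_add, mul_add, mul_add]
      have hA : PPσ * phi Sx S
          (∑ p : Fin n, ∑ q ∈ Finset.Ioi p, a p q • (ι ℝ (dx p) * ι ℝ (dx q))) =
          a i j • (PPσ * (ι ℝ (dx i) * ι ℝ (dx j))) := by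
        rw [map_sum, Finset.mul_sum]
        rw [Finset.sum_eq_single i (fun p _ hpi => by
            rw [map_sum, Finset.mul_sum]
            refine Finset.sum_eq_zero fun q hq => ?_
            rw [map_smul, map_mul, phi_ι, phi_ι, mul_smul_comm,
              hkillpair p q (Finset.mem_Ioi.mp hq) (fun hh => hpi hh.1), smul_zero])
          (fun hi' => absurd (Finset.mem_univ i) hi')]
        rw [map_sum, Finset.mul_sum]
        rw [Finset.sum_eq_single j (fun q hq hqj => by
            rw [map_smul, map_mul, phi_ι, phi_ι, mul_smul_comm,
              hkillpair i q (Finset.mem_Ioi.mp hq) (fun hh => hqj hh.2), smul_zero])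
          (fun hj' => absurd (Finset.mem_Ioi.mpr hij) hj')]
        rw [map_smul, map_mul, phi_ι, phi_ι, mul_smul_comm, pim_dx, pim_dx,
          if_pos hiSx, if_pos hjSx]
      have hB : PPσ * phi Sx S
          (∑ p : Fin n, ∑ q : Fin n, b p q • (ι ℝ (dx p) * ι ℝ (dy q))) = 0 := by
        rw [map_sum, Finset.mul_sum]
        refine Finset.sum_eq_zero fun p _ => ?_
        rw [map_sum, Finset.mul_sum]
        refine Finset.sum_eq_zero fun q _ => ?_
        rw [map_smul, map_mul, phi_ι, phi_ι, mul_smul_comm]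
        by_cases hq : q ∈ S
        · rw [pim_dy, if_pos hq, killy' q _ hq, smul_zero]
        · rw [pim_dy, if_neg hq]
          simp
      have hC : PPσ * phi Sx S
          (∑ p : Fin n, ∑ q ∈ Finset.Ioi p, c p q • (ι ℝ (dy p) * ι ℝ (dy q))) = 0 := by
        rw [map_sum, Finset.mul_sum]
        refine Finset.sum_eq_zero fun p _ => ?_
        rw [map_sum, Finset.mul_sum]
        refine Finset.sum_eq_zero fun q _ => ?_
        rw [map_smul, map_mul, phi_ι, phi_ι, mul_smul_comm]
        by_cases hp : p ∈ S
        · rw [pim_dy (t := p), if_pos hp, killy p _ hp, smul_zero]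
        · rw [pim_dy (t := p), if_neg hp]
          simp
      rw [hA, hB, hC, add_zero, add_zero]
    · -- nonvanishing
      rw [← pp_snoc]
      refine pp_ne_zero (m+2)
        (Fin.snoc (fun p => dx (σ p)) (dx i)) (Fin.snoc (fun p => dy (σ p)) (dx j))
        (Fin.snoc (fun p => ex (σ p)) (ex i)) (Fin.snoc (fun p => ey (σ p)) (ex j))
        ?_ ?_ ?_ ?_
      all_goals
        intro p q
        induction p using Fin.lastCases with
        | last =>
          induction q using Fin.lastCases with
          | last => simp [hij', Ne.symm hij']
          | cast q' =>
            simp [Ne.symm (hσij q').1, Ne.symm (hσij q').2, (Fin.castSucc_lt_last q').ne']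
        | cast p' =>
          induction q using Fin.lastCases with
          | last => simp [(hσij p').1, (hσij p').2, (Fin.castSucc_lt_last p').ne]
          | cast q' => simp [hσ.eq_iff, Fin.castSucc_inj]
  · -- c-case
    intro i j hij
    have hij' : i ≠ j := ne_of_lt hij
    have hcard : m + 1 ≤ ({i, j}ᶜ : Finset (Fin n)).card := by
      rw [Finset.card_compl, Finset.card_insert_of_notMem (by simp [hij']),
        Finset.card_singleton]
      simp only [Fintype.card_fin]
      omega
    set σ : Fin (m+1) → Fin n :=
      fun p => Finset.orderEmbOfCardLe ({i, j}ᶜ : Finset (Fin n)) hcard p with hσdef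
    have hσ : Function.Injective σ :=
      fun p q hpq => (Finset.orderEmbOfCardLe _ hcard).injective hpq
    have hσij : ∀ p, σ p ≠ i ∧ σ p ≠ j := by
      intro p
      have hp := Finset.orderEmbOfCardLe_mem ({i, j}ᶜ : Finset (Fin n)) hcard p
      rw [Finset.mem_compl, Finset.mem_insert, Finset.mem_singleton] at hp
      push_neg at hp
      exact hp
    set S : Finset (Fin n) := Finset.image σ Finset.univ with hSdef
    have hS : ∀ t, t ∈ S ↔ ∃ p, σ p = t := by intro t; simp [hSdef]
    have hiS : i ∉ S := fun hmem => by
      obtain ⟨p, hp⟩ := (hS i).mp hmem; exact (hσij p).1 hp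
    have hjS : j ∉ S := fun hmem => by
      obtain ⟨p, hp⟩ := (hS j).mp hmem; exact (hσij p).2 hp
    set Sy : Finset (Fin n) := S ∪ {i, j} with hSydef
    have hmem : ∀ t, (t ∈ S ∧ t ∈ Sy) ↔ ∃ p, σ p = t := by
      intro t
      rw [← hS t]
      constructor
      · exact fun ht => ht.1
      · intro ht; exact ⟨ht, Finset.mem_union_left _ ht⟩
    have hiSy : i ∈ Sy := Finset.mem_union_right _ (by simp)
    have hjSy : j ∈ Sy := Finset.mem_union_right _ (by simp)
    refine main_extract σ hσ S Sy hmem _ h (c i j) (dy i) (dy j) ?_ ?_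
    · set PPσ := PP ℝ (fun p => dx (σ p)) (fun p => dy (σ p)) with hPPσ
      have killx : ∀ (t : Fin n) (w : Module.Dual ℝ (Vn n)), t ∈ S →
          PPσ * (ι ℝ (dx t) * ι ℝ w) = 0 := by
        intro t w ht
        obtain ⟨p, rfl⟩ := (hS t).mp ht
        exact pp_mul_pair_eq_zero _ _ _ _ (Or.inl ⟨p, Or.inl rfl⟩)
      have killy : ∀ (t : Fin n) (w : Module.Dual ℝ (Vn n)), t ∈ S →
          PPσ * (ι ℝ (dy t) * ι ℝ w) = 0 := by
        intro t w ht
        obtain ⟨p, rfl⟩ := (hS t).mp ht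
        exact pp_mul_pair_eq_zero _ _ _ _ (Or.inl ⟨p, Or.inr rfl⟩)
      have killx' : ∀ (t : Fin n) (w : Module.Dual ℝ (Vn n)), t ∈ S →
          PPσ * (ι ℝ w * ι ℝ (dx t)) = 0 := by
        intro t w ht
        obtain ⟨p, rfl⟩ := (hS t).mp ht
        exact pp_mul_pair_eq_zero _ _ _ _ (Or.inr (Or.inr (Or.inl ⟨p, Or.inl rfl⟩)))
      have killy' : ∀ (t : Fin n) (w : Module.Dual ℝ (Vn n)), t ∈ S →
          PPσ * (ι ℝ w * ι ℝ (dy t)) = 0 := by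
        intro t w ht
        obtain ⟨p, rfl⟩ := (hS t).mp ht
        exact pp_mul_pair_eq_zero _ _ _ _ (Or.inr (Or.inr (Or.inl ⟨p, Or.inr rfl⟩)))
      have hkillpair : ∀ p q : Fin n, p < q → ¬(p = i ∧ q = j) →
          PPσ * (ι ℝ (pim S Sy (dy p)) * ι ℝ (pim S Sy (dy q))) = 0 := by
        intro p q hlt hpq
        by_cases hp : p ∈ S
        · rw [pim_dy, if_pos (Finset.mem_union_left _ hp)]
          exact killy p _ hp
        · by_cases hpij : p = i ∨ p = j
          · rw [pim_dy (t := p), if_pos (Finset.mem_union_right _ (by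
              rcases hpij with rfl | rfl <;> simp))]
            by_cases hq : q ∈ S
            · rw [pim_dy (t := q), if_pos (Finset.mem_union_left _ hq)]
              exact killy' q _ hq
            · by_cases hqij : q = i ∨ q = j
              · exfalso
                rcases hpij with rfl | rfl <;> rcases hqij with rfl | rfl
                · exact lt_irrefl _ hlt
                · exact hpq ⟨rfl, rfl⟩
                · exact lt_asymm hij hlt
                · exact lt_irrefl _ hlt
              · rw [pim_dy (t := q), if_neg (fun hmemq => by
                  rcases Finset.mem_union.mp hmemq with h' | h'
                  · exact hq h'
                  · exact hqij (by simpa using h'))]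
                simp
          · rw [pim_dy (t := p), if_neg (fun hmemp => by
              rcases Finset.mem_union.mp hmemp with h' | h'
              · exact hp h'
              · exact hpij (by simpa using h'))]
            simp
      rw [map_add, map_add, mul_add, mul_add]
      have hA : PPσ * phi S Sy
          (∑ p : Fin n, ∑ q ∈ Finset.Ioi p, a p q • (ι ℝ (dx p) * ι ℝ (dx q))) = 0 := by
        rw [map_sum, Finset.mul_sum]
        refine Finset.sum_eq_zero fun p _ => ?_
        rw [map_sum, Finset.mul_sum]
        refine Finset.sum_eq_zero fun q _ => ?_
        rw [map_smul, map_mul, phi_ι, phi_ι, mul_smul_comm]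
        by_cases hp : p ∈ S
        · rw [pim_dx (t := p), if_pos hp, killx p _ hp, smul_zero]
        · rw [pim_dx (t := p), if_neg hp]
          simp
      have hB : PPσ * phi S Sy
          (∑ p : Fin n, ∑ q : Fin n, b p q • (ι ℝ (dx p) * ι ℝ (dy q))) = 0 := by
        rw [map_sum, Finset.mul_sum]
        refine Finset.sum_eq_zero fun p _ => ?_
        rw [map_sum, Finset.mul_sum]
        refine Finset.sum_eq_zero fun q _ => ?_
        rw [map_smul, map_mul, phi_ι, phi_ι, mul_smul_comm]
        by_cases hp : p ∈ S
        · rw [pim_dx (t := p), if_pos hp, killx p _ hp, smul_zero]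
        · rw [pim_dx (t := p), if_neg hp]
          simp
      have hC : PPσ * phi S Sy
          (∑ p : Fin n, ∑ q ∈ Finset.Ioi p, c p q • (ι ℝ (dy p) * ι ℝ (dy q))) =
          c i j • (PPσ * (ι ℝ (dy i) * ι ℝ (dy j))) := by
        rw [map_sum, Finset.mul_sum]
        rw [Finset.sum_eq_single i (fun p _ hpi => by
            rw [map_sum, Finset.mul_sum]
            refine Finset.sum_eq_zero fun q hq => ?_
            rw [map_smul, map_mul, phi_ι, phi_ι, mul_smul_comm,
              hkillpair p q (Finset.mem_Ioi.mp hq) (fun hh => hpi hh.1), smul_zero])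
          (fun hi' => absurd (Finset.mem_univ i) hi')]
        rw [map_sum, Finset.mul_sum]
        rw [Finset.sum_eq_single j (fun q hq hqj => by
            rw [map_smul, map_mul, phi_ι, phi_ι, mul_smul_comm,
              hkillpair i q (Finset.mem_Ioi.mp hq) (fun hh => hqj hh.2), smul_zero])
          (fun hj' => absurd (Finset.mem_Ioi.mpr hij) hj')]
        rw [map_smul, map_mul, phi_ι, phi_ι, mul_smul_comm, pim_dy, pim_dy,
          if_pos hiSy, if_pos hjSy]
      rw [hA, hB, hC, zero_add, zero_add]
    · -- nonvanishing
      rw [← pp_snoc]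
      refine pp_ne_zero (m+2)
        (Fin.snoc (fun p => dx (σ p)) (dy i)) (Fin.snoc (fun p => dy (σ p)) (dy j))
        (Fin.snoc (fun p => ex (σ p)) (ey i)) (Fin.snoc (fun p => ey (σ p)) (ey j))
        ?_ ?_ ?_ ?_
      all_goals
        intro p q
        induction p using Fin.lastCases with
        | last =>
          induction q using Fin.lastCases with
          | last => simp [hij', Ne.symm hij']
          | cast q' =>
            simp [Ne.symm (hσij q').1, Ne.symm (hσij q').2, (Fin.castSucc_lt_last q').ne']
        | cast p' =>
          induction q using Fin.lastCases with
          | last => simp [(hσij p').1, (hσij p').2, (Fin.castSucc_lt_last p').ne]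
          | cast q' => simp [hσ.eq_iff, Fin.castSucc_inj]
  · -- b-case
    intro i j hij
    have hij' : i ≠ j := hij
    have hcard : m + 1 ≤ ({i, j}ᶜ : Finset (Fin n)).card := by
      rw [Finset.card_compl, Finset.card_insert_of_notMem (by simp [hij']),
        Finset.card_singleton]
      simp only [Fintype.card_fin]
      omega
    set σ : Fin (m+1) → Fin n :=
      fun p => Finset.orderEmbOfCardLe ({i, j}ᶜ : Finset (Fin n)) hcard p with hσdef
    have hσ : Function.Injective σ :=
      fun p q hpq => (Finset.orderEmbOfCardLe _ hcard).injective hpq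
    have hσij : ∀ p, σ p ≠ i ∧ σ p ≠ j := by
      intro p
      have hp := Finset.orderEmbOfCardLe_mem ({i, j}ᶜ : Finset (Fin n)) hcard p
      rw [Finset.mem_compl, Finset.mem_insert, Finset.mem_singleton] at hp
      push_neg at hp
      exact hp
    set S : Finset (Fin n) := Finset.image σ Finset.univ with hSdef
    have hS : ∀ t, t ∈ S ↔ ∃ p, σ p = t := by intro t; simp [hSdef]
    have hiS : i ∉ S := fun hmem => by
      obtain ⟨p, hp⟩ := (hS i).mp hmem; exact (hσij p).1 hp
    have hjS : j ∉ S := fun hmem => by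
      obtain ⟨p, hp⟩ := (hS j).mp hmem; exact (hσij p).2 hp
    set Sx : Finset (Fin n) := S ∪ {i} with hSxdef
    set Sy : Finset (Fin n) := S ∪ {j} with hSydef
    have hmem : ∀ t, (t ∈ Sx ∧ t ∈ Sy) ↔ ∃ p, σ p = t := by
      intro t
      rw [← hS t]
      constructor
      · rintro ⟨ht1, ht2⟩
        rcases Finset.mem_union.mp ht1 with h' | h'
        · exact h'
        · rcases Finset.mem_union.mp ht2 with h'' | h''
          · exact h''
          · exact absurd ((Finset.mem_singleton.mp h') ▸ Finset.mem_singleton.mp h'')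
              (by simpa using hij')
      · intro ht; exact ⟨Finset.mem_union_left _ ht, Finset.mem_union_left _ ht⟩
    have hiSx : i ∈ Sx := Finset.mem_union_right _ (by simp)
    have hjSy : j ∈ Sy := Finset.mem_union_right _ (by simp)
    refine main_extract σ hσ Sx Sy hmem _ h (b i j) (dx i) (dy j) ?_ ?_
    · set PPσ := PP ℝ (fun p => dx (σ p)) (fun p => dy (σ p)) with hPPσ
      have killx : ∀ (t : Fin n) (w : Module.Dual ℝ (Vn n)), t ∈ S →
          PPσ * (ι ℝ (dx t) * ι ℝ w) = 0 := by
        intro t w ht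
        obtain ⟨p, rfl⟩ := (hS t).mp ht
        exact pp_mul_pair_eq_zero _ _ _ _ (Or.inl ⟨p, Or.inl rfl⟩)
      have killy : ∀ (t : Fin n) (w : Module.Dual ℝ (Vn n)), t ∈ S →
          PPσ * (ι ℝ (dy t) * ι ℝ w) = 0 := by
        intro t w ht
        obtain ⟨p, rfl⟩ := (hS t).mp ht
        exact pp_mul_pair_eq_zero _ _ _ _ (Or.inl ⟨p, Or.inr rfl⟩)
      have killx' : ∀ (t : Fin n) (w : Module.Dual ℝ (Vn n)), t ∈ S →
          PPσ * (ι ℝ w * ι ℝ (dx t)) = 0 := by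
        intro t w ht
        obtain ⟨p, rfl⟩ := (hS t).mp ht
        exact pp_mul_pair_eq_zero _ _ _ _ (Or.inr (Or.inr (Or.inl ⟨p, Or.inl rfl⟩)))
      have killy' : ∀ (t : Fin n) (w : Module.Dual ℝ (Vn n)), t ∈ S →
          PPσ * (ι ℝ w * ι ℝ (dy t)) = 0 := by
        intro t w ht
        obtain ⟨p, rfl⟩ := (hS t).mp ht
        exact pp_mul_pair_eq_zero _ _ _ _ (Or.inr (Or.inr (Or.inl ⟨p, Or.inr rfl⟩)))
      rw [map_add, map_add, mul_add, mul_add]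
      have hA : PPσ * phi Sx Sy
          (∑ p : Fin n, ∑ q ∈ Finset.Ioi p, a p q • (ι ℝ (dx p) * ι ℝ (dx q))) = 0 := by
        rw [map_sum, Finset.mul_sum]
        refine Finset.sum_eq_zero fun p _ => ?_
        rw [map_sum, Finset.mul_sum]
        refine Finset.sum_eq_zero fun q hq => ?_
        rw [map_smul, map_mul, phi_ι, phi_ι, mul_smul_comm]
        have hlt := Finset.mem_Ioi.mp hq
        by_cases hqS : q ∈ S
        · rw [pim_dx (t := q), if_pos (Finset.mem_union_left _ hqS), killx' q _ hqS,
            smul_zero]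
        · by_cases hqi : q = i
          · subst hqi
            rw [pim_dx (t := q), if_pos hiSx]
            by_cases hpS : p ∈ S
            · rw [pim_dx (t := p), if_pos (Finset.mem_union_left _ hpS), killx p _ hpS,
                smul_zero]
            · rw [pim_dx (t := p), if_neg (fun hmemp => by
                rcases Finset.mem_union.mp hmemp with h' | h'
                · exact hpS h'
                · exact absurd (Finset.mem_singleton.mp h' ▸ hlt) (lt_irrefl _))]
              simp
          · rw [pim_dx (t := q), if_neg (fun hmemq => by
              rcases Finset.mem_union.mp hmemq with h' | h'
              · exact hqS h'
              · exact hqi (Finset.mem_singleton.mp h'))]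
            simp
      have hC : PPσ * phi Sx Sy
          (∑ p : Fin n, ∑ q ∈ Finset.Ioi p, c p q • (ι ℝ (dy p) * ι ℝ (dy q))) = 0 := by
        rw [map_sum, Finset.mul_sum]
        refine Finset.sum_eq_zero fun p _ => ?_
        rw [map_sum, Finset.mul_sum]
        refine Finset.sum_eq_zero fun q hq => ?_
        rw [map_smul, map_mul, phi_ι, phi_ι, mul_smul_comm]
        have hlt := Finset.mem_Ioi.mp hq
        by_cases hpS : p ∈ S
        · rw [pim_dy (t := p), if_pos (Finset.mem_union_left _ hpS), killy p _ hpS,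
            smul_zero]
        · by_cases hpj : p = j
          · subst hpj
            rw [pim_dy (t := p), if_pos hjSy]
            by_cases hqS : q ∈ S
            · rw [pim_dy (t := q), if_pos (Finset.mem_union_left _ hqS), killy' q _ hqS,
                smul_zero]
            · rw [pim_dy (t := q), if_neg (fun hmemq => by
                rcases Finset.mem_union.mp hmemq with h' | h'
                · exact hqS h'
                · exact absurd (Finset.mem_singleton.mp h' ▸ hlt) (lt_irrefl _))]
              simp
          · rw [pim_dy (t := p), if_neg (fun hmemp => by
              rcases Finset.mem_union.mp hmemp with h' | h'
              · exact hpS h'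
              · exact hpj (Finset.mem_singleton.mp h'))]
            simp
      have hB : PPσ * phi Sx Sy
          (∑ p : Fin n, ∑ q : Fin n, b p q • (ι ℝ (dx p) * ι ℝ (dy q))) =
          b i j • (PPσ * (ι ℝ (dx i) * ι ℝ (dy j))) := by
        rw [map_sum, Finset.mul_sum]
        rw [Finset.sum_eq_single i (fun p _ hpi => by
            rw [map_sum, Finset.mul_sum]
            refine Finset.sum_eq_zero fun q _ => ?_
            rw [map_smul, map_mul, phi_ι, phi_ι, mul_smul_comm]
            by_cases hpS : p ∈ S
            · rw [pim_dx (t := p), if_pos (Finset.mem_union_left _ hpS), killx p _ hpS,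
                smul_zero]
            · rw [pim_dx (t := p), if_neg (fun hmemp => by
                rcases Finset.mem_union.mp hmemp with h' | h'
                · exact hpS h'
                · exact hpi (Finset.mem_singleton.mp h'))]
              simp)
          (fun hi' => absurd (Finset.mem_univ i) hi')]
        rw [map_sum, Finset.mul_sum]
        rw [Finset.sum_eq_single j (fun q _ hqj => by
            rw [map_smul, map_mul, phi_ι, phi_ι, mul_smul_comm]
            by_cases hqS : q ∈ S
            · rw [pim_dy (t := q), if_pos (Finset.mem_union_left _ hqS), killy' q _ hqS,
                smul_zero]
            · rw [pim_dy (t := q), if_neg (fun hmemq => by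
                rcases Finset.mem_union.mp hmemq with h' | h'
                · exact hqS h'
                · exact hqj (Finset.mem_singleton.mp h'))]
              simp)
          (fun hj' => absurd (Finset.mem_univ j) hj')]
        rw [map_smul, map_mul, phi_ι, phi_ι, mul_smul_comm, pim_dx, pim_dy,
          if_pos hiSx, if_pos hjSy]
      rw [hA, hB, hC, zero_add, add_zero]
    · -- nonvanishing
      rw [← pp_snoc]
      refine pp_ne_zero (m+2)
        (Fin.snoc (fun p => dx (σ p)) (dx i)) (Fin.snoc (fun p => dy (σ p)) (dy j))
        (Fin.snoc (fun p => ex (σ p)) (ex i)) (Fin.snoc (fun p => ey (σ p)) (ey j))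
        ?_ ?_ ?_ ?_
      all_goals
        intro p q
        induction p using Fin.lastCases with
        | last =>
          induction q using Fin.lastCases with
          | last => simp [hij', Ne.symm hij']
          | cast q' =>
            simp [Ne.symm (hσij q').1, Ne.symm (hσij q').2, (Fin.castSucc_lt_last q').ne']
        | cast p' =>
          induction q using Fin.lastCases with
          | last => simp [(hσij p').1, (hσij p').2, (Fin.castSucc_lt_last p').ne]
          | cast q' => simp [hσ.eq_iff, Fin.castSucc_inj]
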